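/- Let $f:(0,\infty)\to\mathbb{R}$ be continuously differentiable with $f(r)\to 0$ as $r\to\infty$ and suppose $r\mapsto f(r)/r$ and $f'$ are bounded. If $g(r) := f'(r) + f(r)/r$ satisfies $\|g\|_{L^\infty} < \infty$, then $|f(r)/r| \le \tfrac{1}{2}\|g\|_{L^\infty}$ for all $r>0$. -/

import Mathlib

theorem stmt_11 (f f' : ℝ → ℝ) (M : ℝ) (hM : 0 ≤ M)
    (hderiv : ∀ r ∈ Set.Ioi (0:ℝ), HasDerivAt f (f' r) r)
    (hf'cont : ContinuousOn f' (Set.Ioi 0))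
    (hlim : Filter.Tendsto f Filter.atTop (nhds 0))
    (hbdd : ∃ C, ∀ r ∈ Set.Ioi (0:ℝ), |f r / r| ≤ C ∧ |f' r| ≤ C)
    (hg : ∀ r ∈ Set.Ioi (0:ℝ), |f' r + f r / r| ≤ M) :
    ∀ r ∈ Set.Ioi (0:ℝ), |f r / r| ≤ M / 2 := by
  obtain ⟨C, hC⟩ := hbdd
  intro r hr
  rw [Set.mem_Ioi] at hr
  -- derivative of the auxiliary functions
  have hd : ∀ (c : ℝ), ∀ s ∈ Set.Ioi (0:ℝ),
      HasDerivAt (fun s => M * s ^ 2 / 2 + c * (s * f s))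
        (M * s + c * (f s + s * f' s)) s := by
    intro c s hs
    have h1 := hderiv s hs
    have h2 : HasDerivAt (fun s => s * f s) (1 * f s + s * f' s) s :=
      (hasDerivAt_id s).mul h1
    have h3 : HasDerivAt (fun s : ℝ => M * s ^ 2 / 2) (M * s) s := by
      have := ((hasDerivAt_pow 2 s).const_mul M).div_const 2
      simp only [Nat.cast_ofNat, pow_one] at this
      exact this.congr_deriv (by rw [show (2:ℕ) - 1 = 1 from rfl, pow_one]; ring)
    have := h3.add (h2.const_mul c)
    exact this.congr_deriv (by ring)
  have hMs : ∀ s ∈ Set.Ioi (0:ℝ), |f s + s * f' s| ≤ M * s := by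
    intro s hs
    rw [Set.mem_Ioi] at hs
    have h1 := hg s hs
    have h2 : f s + s * f' s = s * (f' s + f s / s) := by
      field_simp
      ring
    rw [h2, abs_mul, abs_of_pos hs]
    calc s * |f' s + f s / s| ≤ s * M := by
          exact mul_le_mul_of_nonneg_left h1 hs.le
      _ = M * s := by ring
  have key : ∀ a, 0 < a → a ≤ r → |r * f r| ≤ C * a ^ 2 + M * r ^ 2 / 2 := by
    intro a ha har
    have hsub : Set.Icc a r ⊆ Set.Ioi (0:ℝ) := fun x hx => lt_of_lt_of_le ha hx.1
    have hmono : ∀ (c : ℝ), |c| = 1 →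
        M * a ^ 2 / 2 + c * (a * f a) ≤ M * r ^ 2 / 2 + c * (r * f r) := by
      intro c hc
      have hmo : MonotoneOn (fun s => M * s ^ 2 / 2 + c * (s * f s)) (Set.Icc a r) := by
        apply monotoneOn_of_deriv_nonneg (convex_Icc a r)
        · exact fun s hs => ((hd c s (hsub hs)).continuousAt).continuousWithinAt
        · intro s hs
          rw [interior_Icc] at hs
          exact ((hd c s (hsub (Set.Ioo_subset_Icc_self hs))).differentiableAt).differentiableWithinAt
        · intro s hs
          rw [interior_Icc] at hs
          have hs' : s ∈ Set.Ioi (0:ℝ) := hsub (Set.Ioo_subset_Icc_self hs)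
          rw [(hd c s hs').deriv]
          have h4 := hMs s hs'
          have h5 : -(M * s) ≤ c * (f s + s * f' s) := by
            have : |c * (f s + s * f' s)| ≤ M * s := by
              rw [abs_mul, hc, one_mul]; exact h4
            linarith [neg_abs_le (c * (f s + s * f' s))]
          linarith
      exact hmo (Set.left_mem_Icc.2 har) (Set.right_mem_Icc.2 har) har
    have e1 := hmono 1 (by norm_num)
    have e2 := hmono (-1) (by norm_num)
    have haf : |a * f a| ≤ C * a ^ 2 := by
      have := (hC a (Set.mem_Ioi.2 ha)).1
      have h2 : a * f a = a ^ 2 * (f a / a) := by field_simp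
      rw [h2, abs_mul, abs_of_pos (by positivity : (0:ℝ) < a ^ 2)]
      calc a ^ 2 * |f a / a| ≤ a ^ 2 * C := by
            exact mul_le_mul_of_nonneg_left this (by positivity)
        _ = C * a ^ 2 := by ring
    have ha2 : 0 ≤ M * a ^ 2 / 2 := by positivity
    have haf' := abs_le.mp haf
    rw [abs_le]
    constructor <;> nlinarith [haf'.1, haf'.2]
  -- let a → 0⁺
  have hrf : |r * f r| ≤ M * r ^ 2 / 2 := by
    have htend : Filter.Tendsto (fun a : ℝ => C * a ^ 2 + M * r ^ 2 / 2)
        (nhdsWithin 0 (Set.Ioi 0)) (nhds (M * r ^ 2 / 2)) := by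
      have : Filter.Tendsto (fun a : ℝ => C * a ^ 2 + M * r ^ 2 / 2)
          (nhds 0) (nhds (C * 0 ^ 2 + M * r ^ 2 / 2)) := by
        exact (Filter.Tendsto.const_mul C ((continuous_pow 2).tendsto 0)).add
          tendsto_const_nhds
      simpa using this.mono_left nhdsWithin_le_nhds
    refine ge_of_tendsto htend ?_
    filter_upwards [Ioo_mem_nhdsGT_of_mem (Set.mem_Ico.2 ⟨le_refl (0:ℝ), hr⟩)] with a ha
    exact key a ha.1 ha.2.le
  have h2 : |f r / r| = |r * f r| / r ^ 2 := by
    rw [abs_div, abs_of_pos hr]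
    rw [abs_mul, abs_of_pos hr]
    field_simp
  rw [h2]
  rw [div_le_iff₀ (by positivity)]
  calc |r * f r| ≤ M * r ^ 2 / 2 := hrf
    _ = M / 2 * r ^ 2 := by ring
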